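/- arXiv:2010.01845 — 4 statements merged into one kernel-verified Lean document; each statement's English description precedes it below -/
import Mathlib

section
/- The IWAE bound is monotonically non-decreasing in the number of importance samples: L_IWAE(K+1) ≥ L_IWAE(K) for all K ≥ 1. -/
/-!
Among `K + 1` i.i.d. samples, each of the `K + 1` leave-one-out subsets is itself an i.i.d.
`K`-sample, so `L_IWAE(K)` is the expectation of the average over `j` of the log of the
leave-one-out means. The average of those means is the full `(K + 1)`-sample mean, so
concavity of `log` (Jensen) bounds that average pointwise by the log of the full mean.
-/

open MeasureTheory Finset

theorem Fin.sum_sum_succAbove {M : Type*} [AddCommGroup M] {n : ℕ} (f : Fin (n + 1) → M) :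
    ∑ j : Fin (n + 1), ∑ i, f (j.succAbove i) = n • ∑ k, f k := by
  have hdrop : ∀ j, ∑ i, f (j.succAbove i) = ∑ k, f k - f j := fun j ↦ by
    rw [Fin.sum_univ_succAbove f j, add_sub_cancel_left]
  simp only [hdrop, sum_sub_distrib, sum_const, succ_nsmul,
    add_sub_cancel_right]

theorem Real.mean_log_mean_succAbove_le_log_mean {K : ℕ} (hK : 0 < K) {x : Fin (K + 1) → ℝ}
    (hx : ∀ k, 0 < x k) :
    1 / ((K : ℝ) + 1) * ∑ j : Fin (K + 1), Real.log (1 / (K : ℝ) * ∑ i, x (j.succAbove i))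
      ≤ Real.log (1 / ((K : ℝ) + 1) * ∑ k, x k) := by
  have : Nonempty (Fin K) := Fin.pos_iff_nonempty.mp hK
  have hweights : ∑ _j : Fin (K + 1), 1 / ((K : ℝ) + 1) = 1 := by
    rw [sum_const, card_univ, Fintype.card_fin, nsmul_eq_mul]
    push_cast
    field_simp
  have hjensen := strictConcaveOn_log_Ioi.concaveOn.le_map_sum (t := univ)
    (fun _ _ ↦ by positivity) hweights
    (p := fun j ↦ 1 / (K : ℝ) * ∑ i, x (j.succAbove i))
    (fun j _ ↦ mul_pos (by positivity) (sum_pos (fun i _ ↦ hx _) univ_nonempty))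
  have hmeans : ∑ j : Fin (K + 1), 1 / ((K : ℝ) + 1) * (1 / (K : ℝ) * ∑ i, x (j.succAbove i))
      = 1 / ((K : ℝ) + 1) * ∑ k, x k := by
    rw [← mul_sum, ← mul_sum, Fin.sum_sum_succAbove, nsmul_eq_mul]
    field_simp
  simpa only [smul_eq_mul, ← mul_sum, hmeans] using hjensen

theorem MeasureTheory.measurePreserving_comp_succAbove {n : ℕ} {α : Fin (n + 1) → Type*}
    [∀ i, MeasurableSpace (α i)] (μ : ∀ i, Measure (α i)) [∀ i, IsProbabilityMeasure (μ i)]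
    (j : Fin (n + 1)) :
    MeasurePreserving (fun (z : ∀ i, α i) (i : Fin n) ↦ z (j.succAbove i))
      (Measure.pi μ) (Measure.pi fun i ↦ μ (j.succAbove i)) :=
  measurePreserving_snd.comp (measurePreserving_piFinSuccAbove μ j)

section leaveOneOut

variable {n : ℕ} {α : Type*} [MeasurableSpace α] (μ : Measure α) [IsProbabilityMeasure μ]
  {g : (Fin n → α) → ℝ}

theorem MeasureTheory.Integrable.comp_succAbove (hg : Integrable g (Measure.pi fun _ ↦ μ))
    (j : Fin (n + 1)) :
    Integrable (fun z ↦ g (fun i ↦ z (j.succAbove i))) (Measure.pi fun _ ↦ μ) :=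
  (measurePreserving_comp_succAbove (fun _ ↦ μ) j).integrable_comp_of_integrable hg

theorem MeasureTheory.integral_mean_comp_succAbove
    (hg : Integrable g (Measure.pi fun _ ↦ μ)) :
    ∫ z : Fin (n + 1) → α, 1 / ((n : ℝ) + 1) * ∑ j : Fin (n + 1), g (fun i ↦ z (j.succAbove i))
        ∂(Measure.pi fun _ ↦ μ)
      = ∫ y, g y ∂(Measure.pi fun _ ↦ μ) := by
  have heach (j : Fin (n + 1)) :
      ∫ z, g (fun i ↦ z (j.succAbove i)) ∂(Measure.pi fun _ ↦ μ)
        = ∫ y, g y ∂(Measure.pi fun _ ↦ μ) := by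
    have hT := measurePreserving_comp_succAbove (fun _ ↦ μ) j
    rw [← hT.map_eq] at hg ⊢
    exact (integral_map hT.measurable.aemeasurable hg.aestronglyMeasurable).symm
  rw [integral_const_mul, integral_finsetSum univ fun j _ ↦ hg.comp_succAbove μ j]
  simp only [heach, sum_const, card_univ, Fintype.card_fin, nsmul_eq_mul]
  push_cast
  field_simp

end leaveOneOut

theorem iwae_monotone_general {α : Type*} [MeasurableSpace α]
    (μ : Measure α) [IsProbabilityMeasure μ]
    (w : α → ℝ) (hwpos : ∀ z, 0 < w z)
    (hint : ∀ K : ℕ, Integrable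
      (fun z : Fin K → α => Real.log ((1 / (K : ℝ)) * ∑ k, w (z k)))
      (Measure.pi fun _ => μ))
    (K : ℕ) (hK : 1 ≤ K) :
    ∫ z : Fin K → α, Real.log ((1 / (K : ℝ)) * ∑ k, w (z k))
        ∂(Measure.pi fun _ => μ)
      ≤ ∫ z : Fin (K + 1) → α, Real.log ((1 / ((K : ℝ) + 1)) * ∑ k, w (z k))
        ∂(Measure.pi fun _ => μ) := by
  rw [← integral_mean_comp_succAbove μ (hint K)]
  refine integral_mono ?_ (by exact_mod_cast hint (K + 1)) fun z ↦
    Real.mean_log_mean_succAbove_le_log_mean (x := fun k ↦ w (z k)) hK fun k ↦ hwpos (z k)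
  exact (integrable_finsetSum univ fun j _ ↦ (hint K).comp_succAbove μ j).const_mul _

/-- The IWAE bound is monotonically non-decreasing in the number of importance samples:
`L_IWAE(K) ≤ L_IWAE(K+1)` for all `K ≥ 1`. -/
theorem iwae_monotone {α : Type*} [MeasurableSpace α]
    (μ : Measure α) [IsProbabilityMeasure μ]
    (w : α → ℝ) (hwpos : ∀ z, 0 < w z) (hwm : Measurable w) (hwint : Integrable w μ)
    (hint : ∀ K : ℕ, Integrable
      (fun z : Fin K → α => Real.log ((1 / (K : ℝ)) * ∑ k, w (z k)))
      (Measure.pi fun _ => μ))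
    (K : ℕ) (hK : 1 ≤ K) :
    ∫ z : Fin K → α, Real.log ((1 / (K : ℝ)) * ∑ k, w (z k))
        ∂(Measure.pi fun _ => μ)
      ≤ ∫ z : Fin (K + 1) → α, Real.log ((1 / ((K : ℝ) + 1)) * ∑ k, w (z k))
        ∂(Measure.pi fun _ => μ) :=
  iwae_monotone_general μ w hwpos hint K hK
end

section
/- Under the augmented posterior p(z_{1:K}, ℓ | x), the marginal distribution of z_ℓ (the selected coordinate) is the posterior p(z|x) = p(x,z)/p(x). -/
open MeasureTheory

/-!
By Fubini, the integrand factors over the coordinates: the selected coordinate carries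
`h · p / (K · px)` and every other coordinate carries `q`, whose integral is `1`. Each of the `K`
choices of `ℓ` thus contributes `1/K` of `∫ h · p / px`.
-/

theorem integral_comp_eval_mul_prod_sdiff_singleton {ι α 𝕜 : Type*} [Fintype ι] [DecidableEq ι]
    [RCLike 𝕜] [MeasurableSpace α] (μ : Measure α) [SigmaFinite μ] (f g : α → 𝕜) (ℓ : ι) :
    ∫ z : ι → α, f (z ℓ) * ∏ k ∈ Finset.univ \ {ℓ}, g (z k) ∂(Measure.pi fun _ => μ)
      = (∫ y, f y ∂μ) * (∫ y, g y ∂μ) ^ (Fintype.card ι - 1) := by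
  obtain ⟨F, hFℓ, hF⟩ : ∃ F : ι → α → 𝕜, F ℓ = f ∧ ∀ k ≠ ℓ, F k = g :=
    ⟨Function.update (fun _ => g) ℓ f, Function.update_self ..,
      fun _ hk => Function.update_of_ne hk ..⟩
  have split (φ : (α → 𝕜) → ι → 𝕜) :
      ∏ k, φ (F k) k = φ f ℓ * ∏ k ∈ Finset.univ \ {ℓ}, φ g k := by
    rw [Finset.prod_eq_mul_prod_sdiff_singleton_of_mem (Finset.mem_univ ℓ), hFℓ]
    congr 1
    exact Finset.prod_congr rfl fun k hk => by rw [hF k (by simpa using hk)]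
  calc ∫ z : ι → α, f (z ℓ) * ∏ k ∈ Finset.univ \ {ℓ}, g (z k) ∂(Measure.pi fun _ => μ)
      = ∫ z : ι → α, ∏ k, F k (z k) ∂(Measure.pi fun _ => μ) :=
        integral_congr_ae (.of_forall fun z => (split fun G k => G (z k)).symm)
    _ = ∏ k, ∫ y, F k y ∂μ := integral_fintype_prod_eq_prod F
    _ = (∫ y, f y ∂μ) * (∫ y, g y ∂μ) ^ (Fintype.card ι - 1) := by
        rw [split fun G _ => ∫ y, G y ∂μ, Finset.prod_const, Finset.card_univ_sdiff,
          Finset.card_singleton]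

theorem augmented_posterior_selected_marginal_general {α : Type*} [MeasurableSpace α]
    (μ : Measure α) [SigmaFinite μ]
    (K : ℕ) (hK : 1 ≤ K) (p q h : α → ℝ)
    (hq1 : ∫ z, q z ∂μ = 1)
    (px : ℝ) :
    ∑ ℓ : Fin K, ∫ z : Fin K → α,
        h (z ℓ) * ((1 / ((K : ℝ) * px)) * p (z ℓ) * ∏ k ∈ Finset.univ \ {ℓ}, q (z k))
        ∂(Measure.pi fun _ => μ)
      = ∫ y, h y * (p y / px) ∂μ := by
  have hsel (ℓ : Fin K) : ∫ z : Fin K → α,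
        h (z ℓ) * ((1 / ((K : ℝ) * px)) * p (z ℓ) * ∏ k ∈ Finset.univ \ {ℓ}, q (z k))
        ∂(Measure.pi fun _ => μ) = (1 / K) * ∫ y, h y * (p y / px) ∂μ := by
    have hfactor := integral_comp_eval_mul_prod_sdiff_singleton μ
      (fun y => 1 / (K : ℝ) * (h y * (p y / px))) q ℓ
    rw [hq1, one_pow, mul_one, integral_const_mul] at hfactor
    rw [← hfactor]
    congr 1 with z
    ring
  have hK0 : (K : ℝ) ≠ 0 := Nat.cast_ne_zero.2 (by omega)
  simp only [hsel, Finset.sum_const, Finset.card_univ, Fintype.card_fin, nsmul_eq_mul]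
  field_simp

/-- Under the augmented posterior
`p(z_{1:K}, ℓ | x) = (1/(K p(x))) p(x, z_ℓ) ∏_{k≠ℓ} q(z_k|x)`, the marginal
distribution of the selected coordinate `z_ℓ` is the posterior `p(z|x) = p(x,z)/p(x)`:
for any bounded measurable `h`, `E[h(z_ℓ)] = E_{p(z|x)}[h(z)]`. -/
theorem augmented_posterior_selected_marginal {α : Type*} [MeasurableSpace α]
    (μ : Measure α) [SigmaFinite μ]
    (K : ℕ) (hK : 1 ≤ K) (p q h : α → ℝ)
    (hp0 : ∀ z, 0 ≤ p z) (hq0 : ∀ z, 0 ≤ q z)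
    (hpm : Measurable p) (hqm : Measurable q) (hhm : Measurable h)
    (C : ℝ) (hhb : ∀ y, |h y| ≤ C)
    (hq1 : ∫ z, q z ∂μ = 1) (hqint : Integrable q μ) (hpint : Integrable p μ)
    (px : ℝ) (hpx : ∫ z, p z ∂μ = px) (hpx0 : 0 < px) :
    ∑ ℓ : Fin K, ∫ z : Fin K → α,
        h (z ℓ) * ((1 / ((K : ℝ) * px)) * p (z ℓ) * ∏ k ∈ Finset.univ \ {ℓ}, q (z k))
        ∂(Measure.pi fun _ => μ)
      = ∫ y, h y * (p y / px) ∂μ :=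
  augmented_posterior_selected_marginal_general μ K hK p q h hq1 px
end

section
/- Telescoping unbiasedness (idealized finite-meeting case): let (u^{(t)})_{t≥0} and (ū^{(t)})_{t≥0} be two sequences of random variables with identical marginals, E[h(u^{(t)})] = E[h(ū^{(t)})] for all t, such that E[h(u^{(t)})] → H as t → ∞, and suppose there is an almost surely finite random time τ with u^{(t)} = ū^{(t-L)} for all t ≥ τ, where L ≥ 1 is a fixed lag. If h is bounded and E[τ] < ∞, then the estimator Ĥ = (1/L)·(∑_{t=t₀}^{t₀+L-1} h(u^{(t)}) + ∑_{t=t₀+L}^{τ-1} h(u^{(t)}) - h(ū^{(t-L)})) satisfies E[Ĥ] = H. -/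
open MeasureTheory Filter Finset Topology

/-! Truncating the second sum at a deterministic time `N` instead of `τ`, linearity of the
integral and the identical marginals turn the expectation into `(1/L) ∑_{t₀ ≤ t < t₀+L} a t +
(1/L) ∑_{t₀+L ≤ t < N} (a t - a (t - L))` with `a t = E[h(u^{(t)})]`. This telescopes to the
average of `a` over the window `[N - L, N)`, which tends to `H`. On the other hand the
truncated estimator agrees with the true one once `N ≥ τ`, and it is dominated by the
integrable `C + 2Cτ / L`, so by dominated convergence its expectation tends to `E[Ĥ]`. -/

/-- The estimator `Ĥ` for the paths `x t = h(u^{(t)})`, `y t = h(ū^{(t)})`,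
with `τ` replaced by `N`. -/
noncomputable def laggedEstimator (L t₀ : ℕ) (x y : ℕ → ℝ) (N : ℕ) : ℝ :=
  (1 / (L : ℝ)) * ((∑ t ∈ Ico t₀ (t₀ + L), x t) + ∑ t ∈ Ico (t₀ + L) N, (x t - y (t - L)))

theorem Finset.sum_Ico_eq_sum_Ico_min_of_eq_zero {M : Type*} [AddCommMonoid M] {d : ℕ → M}
    {T : ℕ} (hd : ∀ t, T ≤ t → d t = 0) (m N : ℕ) :
    ∑ t ∈ Ico m N, d t = ∑ t ∈ Ico m (min N T), d t := by
  rcases le_total N T with hNT | hTN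
  · rw [min_eq_left hNT]
  · rw [min_eq_right hTN]
    refine (sum_subset (Ico_subset_Ico_right hTN) fun t ht hnt => hd t ?_).symm
    simp only [mem_Ico] at ht hnt
    omega

theorem abs_sum_Ico_le_of_eq_zero {d : ℕ → ℝ} {T : ℕ} {B : ℝ} (hd : ∀ t, T ≤ t → d t = 0)
    (hB : ∀ t, |d t| ≤ B) (m N : ℕ) : |∑ t ∈ Ico m N, d t| ≤ T * B := by
  have hB₀ : 0 ≤ B := (abs_nonneg _).trans (hB 0)
  rw [sum_Ico_eq_sum_Ico_min_of_eq_zero hd]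
  calc |∑ t ∈ Ico m (min N T), d t|
      ≤ ∑ t ∈ Ico m (min N T), |d t| := abs_sum_le_sum_abs _ _
    _ ≤ #(Ico m (min N T)) • B := sum_le_card_nsmul _ _ _ fun t _ => hB t
    _ ≤ T * B := by
      rw [nsmul_eq_mul, Nat.card_Ico]
      gcongr
      exact_mod_cast (Nat.sub_le _ _).trans (min_le_right _ _)

section laggedEstimator

variable {L t₀ : ℕ}

theorem laggedEstimator_self_eq_window_average {x : ℕ → ℝ} {N : ℕ} (hN : t₀ + L ≤ N) :
    laggedEstimator L t₀ x x N = (1 / (L : ℝ)) * ∑ t ∈ Ico (N - L) N, x t := by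
  have hlag : ∑ t ∈ Ico (t₀ + L) N, x (t - L) = ∑ t ∈ Ico t₀ (N - L), x t := by
    conv_lhs => rw [show N = N - L + L by omega]
    exact sum_Ico_add_right_sub_eq _ _ _
  rw [laggedEstimator, sum_sub_distrib, hlag, ← add_sub_assoc, sum_Ico_consecutive _ (by omega) hN,
    ← sum_Ico_consecutive x (show t₀ ≤ N - L by omega) (Nat.sub_le N L), add_sub_cancel_left]

theorem tendsto_window_average {a : ℕ → ℝ} {H : ℝ} (ha : Tendsto a atTop (𝓝 H)) (hL : L ≠ 0) :
    Tendsto (fun N => (1 / (L : ℝ)) * ∑ t ∈ Ico (N - L) N, a t) atTop (𝓝 H) := by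
  have hshift : ∀ j, Tendsto (fun N => a (N - L + j)) atTop (𝓝 H) := fun j =>
    ha.comp <| tendsto_atTop_atTop.mpr fun b => ⟨b + L, fun N hN => by omega⟩
  have hsum := (tendsto_finsetSum (range L) fun j _ => hshift j).const_mul (1 / (L : ℝ))
  rw [sum_const, card_range, nsmul_eq_mul, ← mul_assoc, one_div_mul_cancel (by exact_mod_cast hL),
    one_mul] at hsum
  refine hsum.congr' ?_
  filter_upwards [eventually_ge_atTop L] with N hN
  rw [sum_Ico_eq_sum_range, Nat.sub_sub_self hN]

theorem tendsto_laggedEstimator_self {a : ℕ → ℝ} {H : ℝ} (ha : Tendsto a atTop (𝓝 H))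
    (hL : L ≠ 0) : Tendsto (laggedEstimator L t₀ a a) atTop (𝓝 H) := by
  refine (tendsto_window_average ha hL).congr' ?_
  filter_upwards [eventually_ge_atTop (t₀ + L)] with N hN
  rw [laggedEstimator_self_eq_window_average hN]

variable {x y : ℕ → ℝ} {T : ℕ}

theorem laggedEstimator_eq_min (hmeet : ∀ t, T ≤ t → x t = y (t - L)) (N : ℕ) :
    laggedEstimator L t₀ x y N = laggedEstimator L t₀ x y (min N T) := by
  rw [laggedEstimator, laggedEstimator,
    sum_Ico_eq_sum_Ico_min_of_eq_zero (fun t ht => sub_eq_zero.mpr (hmeet t ht))]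

theorem abs_laggedEstimator_le {C : ℝ} (hx : ∀ t, |x t| ≤ C) (hy : ∀ t, |y t| ≤ C)
    (hmeet : ∀ t, T ≤ t → x t = y (t - L)) (N : ℕ) :
    |laggedEstimator L t₀ x y N| ≤ (1 / (L : ℝ)) * (L * C + T * (2 * C)) := by
  have hhead : |∑ t ∈ Ico t₀ (t₀ + L), x t| ≤ L * C := by
    simpa using (abs_sum_le_sum_abs _ _).trans (sum_le_card_nsmul (Ico t₀ (t₀ + L)) _ C
      fun t _ => hx t)
  have htail : |∑ t ∈ Ico (t₀ + L) N, (x t - y (t - L))| ≤ T * (2 * C) :=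
    abs_sum_Ico_le_of_eq_zero (fun t ht => sub_eq_zero.mpr (hmeet t ht))
      (fun t => (abs_sub _ _).trans (by linarith [hx t, hy (t - L)])) _ _
  rw [laggedEstimator, abs_mul, abs_of_nonneg (by positivity)]
  gcongr
  exact (abs_add_le _ _).trans (add_le_add hhead htail)

end laggedEstimator

section integral

variable {Ω : Type*} [MeasurableSpace Ω] {μ : Measure Ω} {X Y : ℕ → Ω → ℝ}

theorem measurable_laggedEstimator (hX : ∀ t, Measurable (X t)) (hY : ∀ t, Measurable (Y t))
    (L t₀ N : ℕ) : Measurable fun ω => laggedEstimator L t₀ (X · ω) (Y · ω) N := by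
  unfold laggedEstimator
  fun_prop

theorem integral_laggedEstimator (hX : ∀ t, Integrable (X t) μ) (hY : ∀ t, Integrable (Y t) μ)
    (L t₀ N : ℕ) :
    ∫ ω, laggedEstimator L t₀ (X · ω) (Y · ω) N ∂μ =
      laggedEstimator L t₀ (fun t => ∫ ω, X t ω ∂μ) (fun t => ∫ ω, Y t ω ∂μ) N := by
  have hhead : Integrable (fun ω => ∑ t ∈ Ico t₀ (t₀ + L), X t ω) μ :=
    integrable_finsetSum _ fun t _ => hX t
  have htail : Integrable (fun ω => ∑ t ∈ Ico (t₀ + L) N, (X t ω - Y (t - L) ω)) μ :=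
    integrable_finsetSum _ fun t _ => (hX t).sub (hY _)
  simp only [laggedEstimator]
  rw [integral_const_mul, integral_add hhead htail, integral_finsetSum _ fun t _ => hX t,
    integral_finsetSum (f := fun t ω => X t ω - Y (t - L) ω) _ fun t _ => (hX t).sub (hY _)]
  simp_rw [integral_sub (hX _) (hY _)]

end integral

theorem coupling_estimator_unbiased_general {Ω α : Type*} [MeasureSpace Ω]
    [IsProbabilityMeasure (volume : Measure Ω)] [MeasurableSpace α]
    (u ubar : ℕ → Ω → α)
    (hum : ∀ t, Measurable (u t)) (hubm : ∀ t, Measurable (ubar t))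
    (h : α → ℝ) (hhm : Measurable h) (C : ℝ) (hhb : ∀ x, |h x| ≤ C)
    (H : ℝ) (L t₀ : ℕ) (hL : 1 ≤ L)
    (hmarg : ∀ t, (∫ ω, h (u t ω)) = ∫ ω, h (ubar t ω))
    (hconv : Filter.Tendsto (fun t => ∫ ω, h (u t ω)) Filter.atTop (nhds H))
    (τ : Ω → ℕ)
    (hτint : Integrable (fun ω => (τ ω : ℝ)))
    (hmeet : ∀ ω, ∀ t, τ ω ≤ t → u t ω = ubar (t - L) ω) :
    ∫ ω, (1 / (L : ℝ)) *
        ((∑ t ∈ Finset.Ico t₀ (t₀ + L), h (u t ω)) +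
          ∑ t ∈ Finset.Ico (t₀ + L) (τ ω), (h (u t ω) - h (ubar (t - L) ω)))
      = H := by
  set X : ℕ → Ω → ℝ := fun t ω => h (u t ω)
  set Y : ℕ → Ω → ℝ := fun t ω => h (ubar t ω)
  have hXm : ∀ t, Measurable (X t) := fun t => hhm.comp (hum t)
  have hYm : ∀ t, Measurable (Y t) := fun t => hhm.comp (hubm t)
  have hXint : ∀ t, Integrable (X t) := fun t =>
    .of_bound (hXm t).aestronglyMeasurable C (ae_of_all _ fun _ => hhb _)
  have hYint : ∀ t, Integrable (Y t) := fun t =>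
    .of_bound (hYm t).aestronglyMeasurable C (ae_of_all _ fun _ => hhb _)
  have hXY_meet : ∀ ω t, τ ω ≤ t → X t ω = Y (t - L) ω := fun ω t ht => by
    simp only [X, Y, hmeet ω t ht]
  have hmean : Tendsto (fun N => ∫ ω, laggedEstimator L t₀ (X · ω) (Y · ω) N) atTop (𝓝 H) := by
    simp_rw [integral_laggedEstimator hXint hYint, X, Y, ← hmarg]
    exact tendsto_laggedEstimator_self hconv (by omega)
  have hdominated : Tendsto (fun N => ∫ ω, laggedEstimator L t₀ (X · ω) (Y · ω) N) atTop
      (𝓝 (∫ ω, laggedEstimator L t₀ (X · ω) (Y · ω) (τ ω))) := by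
    refine tendsto_integral_of_dominated_convergence
      (fun ω => (1 / (L : ℝ)) * (L * C + τ ω * (2 * C)))
      (fun N => (measurable_laggedEstimator hXm hYm L t₀ N).aestronglyMeasurable)
      (((integrable_const _).add (hτint.mul_const _)).const_mul _)
      (fun N => ae_of_all _ fun ω =>
        abs_laggedEstimator_le (fun _ => hhb _) (fun _ => hhb _) (hXY_meet ω) N)
      (ae_of_all _ fun ω => tendsto_const_nhds.congr' ?_)
    filter_upwards [eventually_ge_atTop (τ ω)] with N hN
    rw [laggedEstimator_eq_min (hXY_meet ω) N, min_eq_right hN]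
  exact tendsto_nhds_unique hdominated hmean

/-- Telescoping unbiasedness of the lagged coupling estimator: if the two chains have
identical marginals in expectation of `h`, the expectations converge to `H`, the chains
meet at an almost surely finite integrable time `τ` and stay together (with lag `L`),
and `h` is bounded, then the coupling estimator is unbiased for `H`. -/
theorem coupling_estimator_unbiased {Ω α : Type*} [MeasureSpace Ω]
    [IsProbabilityMeasure (volume : Measure Ω)] [MeasurableSpace α]
    (u ubar : ℕ → Ω → α)
    (hum : ∀ t, Measurable (u t)) (hubm : ∀ t, Measurable (ubar t))
    (h : α → ℝ) (hhm : Measurable h) (C : ℝ) (hhb : ∀ x, |h x| ≤ C)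
    (H : ℝ) (L t₀ : ℕ) (hL : 1 ≤ L)
    (hmarg : ∀ t, (∫ ω, h (u t ω)) = ∫ ω, h (ubar t ω))
    (hconv : Filter.Tendsto (fun t => ∫ ω, h (u t ω)) Filter.atTop (nhds H))
    (τ : Ω → ℕ) (hτm : Measurable τ)
    (hτint : Integrable (fun ω => (τ ω : ℝ)))
    (hmeet : ∀ ω, ∀ t, τ ω ≤ t → u t ω = ubar (t - L) ω) :
    ∫ ω, (1 / (L : ℝ)) *
        ((∑ t ∈ Finset.Ico t₀ (t₀ + L), h (u t ω)) +
          ∑ t ∈ Finset.Ico (t₀ + L) (τ ω), (h (u t ω) - h (ubar (t - L) ω)))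
      = H :=
  coupling_estimator_unbiased_general u ubar hum hubm h hhm C hhb H L t₀ hL hmarg hconv τ hτint
    hmeet
end

section
/- Lower bound on the meeting probability of coupled ISIR: suppose two coupled ISIR chains share K-1 fresh proposals z*₂,…,z*_K i.i.d. from q(·|x), with bounded weights w ≤ w_max and E_q[w] = p(x), and the indicators are drawn from the maximal coupling of the two categorical weight distributions (which differ in at most one entry). Then the probability that the chains meet in one step is at least p(x)/w_max - p(x)/(K·w_max), which is increasing in K. -/
open MeasureTheory Finset

/-!
Both normalizers `a + S` and `b + S`, where `S` is the total weight of the `K - 1` shared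
proposals, are at most `K * wmax`. Hence every shared index `k` is selected by both chains with
probability at least `w_k / (K * wmax)`, and taking expectations each of the `K - 1` proposals
contributes `p(x) / (K * wmax)`.
-/

/-- The probability that the maximal coupling of the categorical distributions proportional to
`(a, x)` and `(b, x)`, the slots of `a` and `b` lying outside `s`, selects the same index in `s`. -/
noncomputable def overlapMass {ι : Type*} (s : Finset ι) (x : ι → ℝ) (a b : ℝ) : ℝ :=
  ∑ k ∈ s, min (x k / (a + ∑ j ∈ s, x j)) (x k / (b + ∑ j ∈ s, x j))

section Deterministic

variable {ι : Type*} (s : Finset ι) {x : ι → ℝ} {a b : ℝ}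

lemma overlapMass_nonneg (hx : ∀ i ∈ s, 0 ≤ x i) (ha : 0 ≤ a) (hb : 0 ≤ b) :
    0 ≤ overlapMass s x a b :=
  sum_nonneg fun k hk => le_min (div_nonneg (hx k hk) (add_nonneg ha (sum_nonneg hx)))
    (div_nonneg (hx k hk) (add_nonneg hb (sum_nonneg hx)))

lemma overlapMass_le_one (hx : ∀ i ∈ s, 0 ≤ x i) (ha : 0 < a) : overlapMass s x a b ≤ 1 := by
  have hS := sum_nonneg hx
  calc overlapMass s x a b ≤ ∑ k ∈ s, x k / (a + ∑ j ∈ s, x j) :=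
        sum_le_sum fun k _ => min_le_left _ _
    _ = (∑ j ∈ s, x j) / (a + ∑ j ∈ s, x j) := (sum_div _ _ _).symm
    _ ≤ 1 := div_le_one_of_le₀ (by linarith) (by linarith)

lemma sum_div_le_overlapMass (hx : ∀ i ∈ s, 0 ≤ x i) (ha : 0 < a) (hb : 0 < b) {M : ℝ}
    (haM : a + ∑ j ∈ s, x j ≤ M) (hbM : b + ∑ j ∈ s, x j ≤ M) :
    (∑ j ∈ s, x j) / M ≤ overlapMass s x a b := by
  have hS := sum_nonneg hx
  rw [sum_div]
  exact sum_le_sum fun k hk => le_min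
    (div_le_div_of_nonneg_left (hx k hk) (by linarith) haM)
    (div_le_div_of_nonneg_left (hx k hk) (by linarith) hbM)

end Deterministic

section Expectation

variable {ι α : Type*} [Fintype ι] [MeasurableSpace α] (μ : Measure α) [IsProbabilityMeasure μ]
  (s : Finset ι) {w : α → ℝ} {a b : ℝ}

lemma integrable_overlapMass (hwm : Measurable w) (hw0 : ∀ y, 0 ≤ w y) (ha : 0 < a)
    (hb : 0 < b) :
    Integrable (fun y : ι → α => overlapMass s (fun k => w (y k)) a b)
      (Measure.pi fun _ => μ) := by
  refine Integrable.of_bound ?_ 1 (ae_of_all _ fun y => ?_)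
  · unfold overlapMass
    fun_prop
  · rw [Real.norm_of_nonneg (overlapMass_nonneg s (fun k _ => hw0 _) ha.le hb.le)]
    exact overlapMass_le_one s (fun k _ => hw0 _) ha

lemma le_integral_overlapMass (hwm : Measurable w) (hw0 : ∀ y, 0 ≤ w y) {wmax M : ℝ}
    (hwb : ∀ y, w y ≤ wmax) (ha : 0 < a) (hb : 0 < b)
    (haM : a + #s * wmax ≤ M) (hbM : b + #s * wmax ≤ M) :
    #s * (∫ y, w y ∂μ) / M ≤
      ∫ y : ι → α, overlapMass s (fun k => w (y k)) a b ∂(Measure.pi fun _ => μ) := by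
  have hw_int : Integrable w μ := Integrable.of_bound hwm.aestronglyMeasurable wmax
    (ae_of_all _ fun y => by rw [Real.norm_of_nonneg (hw0 y)]; exact hwb y)
  have hS : ∀ y : ι → α, ∑ j ∈ s, w (y j) ≤ #s * wmax := fun y => by
    simpa using sum_le_card_nsmul s _ _ fun j _ => hwb (y j)
  calc #s * (∫ y, w y ∂μ) / M
      = ∫ y : ι → α, (∑ j ∈ s, w (y j)) / M ∂(Measure.pi fun _ => μ) := by
        rw [integral_div, integral_finsetSum s fun j _ => integrable_comp_eval hw_int]
        simp [integral_comp_eval (μ := fun _ : ι => μ) hwm.aestronglyMeasurable]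
    _ ≤ _ := integral_mono
        ((integrable_finsetSum s fun j _ => integrable_comp_eval hw_int).div_const M)
        (integrable_overlapMass μ s hwm hw0 ha hb)
        fun y => sum_div_le_overlapMass s (fun j _ => hw0 _) ha hb
          (by linarith [hS y]) (by linarith [hS y])

end Expectation

/-- Lower bound on the one-step meeting probability of coupled ISIR: with `K - 1` shared
fresh proposals, bounded weights `w ≤ w_max` with `E_q[w] = p(x)`, and retained-sample
weights `a, b ∈ (0, w_max]` in slot `0`, the meeting probability
`E[∑_{k≠0} min(w̃_k, ṽ_k)]` is at least `p(x)/w_max - p(x)/(K w_max)`, a bound that is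
increasing in `K`. -/
theorem coupled_isir_meeting_prob_lower_bound {α : Type*} [MeasurableSpace α]
    (μ : Measure α) [IsProbabilityMeasure μ]
    (K : ℕ) (hK : 2 ≤ K) (w : α → ℝ) (hwm : Measurable w)
    (wmax px : ℝ) (hwpos : ∀ y, 0 < w y) (hwb : ∀ y, w y ≤ wmax)
    (hpx : ∫ y, w y ∂μ = px) (hpx0 : 0 < px)
    (a b : ℝ) (ha0 : 0 < a) (ha : a ≤ wmax) (hb0 : 0 < b) (hb : b ≤ wmax) :
    (px / wmax - px / ((K : ℝ) * wmax) ≤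
      ∫ y : Fin K → α,
        ∑ k ∈ Finset.univ \ {(⟨0, by omega⟩ : Fin K)},
          min (w (y k) / (a + ∑ j ∈ Finset.univ \ {(⟨0, by omega⟩ : Fin K)}, w (y j)))
              (w (y k) / (b + ∑ j ∈ Finset.univ \ {(⟨0, by omega⟩ : Fin K)}, w (y j)))
        ∂(Measure.pi fun _ => μ)) ∧
    (∀ K1 K2 : ℕ, 2 ≤ K1 → K1 ≤ K2 →
      px / wmax - px / ((K1 : ℝ) * wmax) ≤ px / wmax - px / ((K2 : ℝ) * wmax)) := by
  have hwmax : 0 < wmax := ha0.trans_le ha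
  refine ⟨?_, fun K1 K2 hK1 hK12 => ?_⟩
  · have hcard : (#(univ \ {(⟨0, by omega⟩ : Fin K)}) : ℝ) = K - 1 := by
      rw [card_sdiff_of_subset (subset_univ _), card_univ, Fintype.card_fin, card_singleton,
        Nat.cast_sub (by omega), Nat.cast_one]
    have hmeet := le_integral_overlapMass μ (univ \ {(⟨0, by omega⟩ : Fin K)}) hwm
      (fun y => (hwpos y).le) hwb ha0 hb0 (M := K * wmax)
      (by rw [hcard]; linarith) (by rw [hcard]; linarith)
    rw [hcard, hpx] at hmeet
    calc px / wmax - px / ((K : ℝ) * wmax) = (K - 1) * px / (K * wmax) := by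
          field_simp
      _ ≤ _ := hmeet
  · gcongr
end
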